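/- Let Z be an integrable real random variable and τ ∈ ℝ with q = Pr[Z ≤ τ] > 0. Then for every measurable set B with Pr[Z ∈ B] ≥ q, E[Z | Z ≤ τ] ≤ E[Z | Z ∈ B]; that is, among all events of probability at least q, conditioning on the lower tail {Z ≤ τ} minimizes the conditional expectation. -/

import Mathlib

/-!
Bathtub principle. Write `s = {Z ≤ τ}`. Trading `s \ t` for `t \ s` removes mass on which
`Z ≤ τ` and adds mass on which `Z > τ`, so `∫_t Z ≥ ∫_s Z + τ (P t - P s)`. Since the mean of `Z`
on `s` is at most `τ` and `P t ≥ P s`, the extra mass `P t - P s` can only raise the mean.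
-/

open MeasureTheory ProbabilityTheory

/-- Conditional expectation of `Z` given an event `A`: `E[Z·1_A] / Pr[A]`. -/
noncomputable def condMean {Ω : Type*} [MeasureSpace Ω] (Z : Ω → ℝ) (A : Set Ω) : ℝ :=
  (∫ ω in A, Z ω) / (ℙ A).toReal

section LowerTail

variable {Ω : Type*} [MeasurableSpace Ω] {μ : Measure Ω} {f : Ω → ℝ} {s t : Set Ω} {c : ℝ}

lemma setIntegral_le_of_le_const_real₀ (hs : NullMeasurableSet s μ) (hμs : μ s ≠ ⊤)
    (hf : IntegrableOn f s μ) (h : ∀ x ∈ s, f x ≤ c) : ∫ x in s, f x ∂μ ≤ c * μ.real s :=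
  calc ∫ x in s, f x ∂μ ≤ ∫ _ in s, c ∂μ := setIntegral_mono_on₀ hf (integrableOn_const hμs) hs h
    _ = c * μ.real s := by rw [setIntegral_const, smul_eq_mul, mul_comm]

lemma setIntegral_ge_of_const_le_real₀ (hs : NullMeasurableSet s μ) (hμs : μ s ≠ ⊤)
    (hf : IntegrableOn f s μ) (h : ∀ x ∈ s, c ≤ f x) : c * μ.real s ≤ ∫ x in s, f x ∂μ :=
  calc c * μ.real s = ∫ _ in s, c ∂μ := by rw [setIntegral_const, smul_eq_mul, mul_comm]
    _ ≤ ∫ x in s, f x ∂μ := setIntegral_mono_on₀ (integrableOn_const hμs) hf hs h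

lemma setIntegral_lowerTail_add_le (hf : Integrable f μ) (ht : NullMeasurableSet t μ)
    (hμs : μ {x | f x ≤ c} ≠ ⊤) (hμt : μ t ≠ ⊤) :
    ∫ x in {x | f x ≤ c}, f x ∂μ + c * (μ.real t - μ.real {x | f x ≤ c}) ≤
      ∫ x in t, f x ∂μ := by
  set s := {x | f x ≤ c}
  have hs : NullMeasurableSet s μ := nullMeasurableSet_le hf.aemeasurable aemeasurable_const
  have hremoved : ∫ x in s \ t, f x ∂μ ≤ c * μ.real (s \ t) :=
    setIntegral_le_of_le_const_real₀ (hs.diff ht)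
      (measure_ne_top_of_subset Set.sdiff_subset hμs) hf.integrableOn fun x hx ↦ hx.1
  have hadded : c * μ.real (t \ s) ≤ ∫ x in t \ s, f x ∂μ :=
    setIntegral_ge_of_const_le_real₀ (ht.diff hs)
      (measure_ne_top_of_subset Set.sdiff_subset hμt) hf.integrableOn
      fun x hx ↦ (not_le.1 hx.2).le
  have hsplit_s := integral_inter_add_sdiff₀ ht (hf.integrableOn (s := s))
  have hsplit_t := integral_inter_add_sdiff₀ hs (hf.integrableOn (s := t))
  have hμsplit_s := measureReal_inter_add_sdiff₀ ht hμs
  have hμsplit_t := measureReal_inter_add_sdiff₀ hs hμt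
  rw [Set.inter_comm] at hsplit_t hμsplit_t
  rw [← hsplit_s, ← hsplit_t, ← hμsplit_s, ← hμsplit_t]
  linarith

lemma div_le_div_of_le_mul_of_add_mul_sub_le {I J a b c : ℝ} (ha : 0 < a) (hab : a ≤ b)
    (hI : I ≤ c * a) (hJ : I + c * (b - a) ≤ J) : I / a ≤ J / b := by
  rw [div_le_div_iff₀ ha (ha.trans_le hab)]
  nlinarith [mul_le_mul_of_nonneg_right hI (sub_nonneg.2 hab)]

theorem setAverage_lowerTail_le (hf : Integrable f μ) (ht : NullMeasurableSet t μ)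
    (hpos : 0 < μ.real {x | f x ≤ c}) (hle : μ.real {x | f x ≤ c} ≤ μ.real t) :
    ⨍ x in {x | f x ≤ c}, f x ∂μ ≤ ⨍ x in t, f x ∂μ := by
  have hμs : μ {x | f x ≤ c} ≠ ⊤ := (ENNReal.toReal_pos_iff.1 hpos).2.ne
  have hμt : μ t ≠ ⊤ := (ENNReal.toReal_pos_iff.1 (hpos.trans_le hle)).2.ne
  simp only [setAverage_eq, smul_eq_mul, ← div_eq_inv_mul]
  exact div_le_div_of_le_mul_of_add_mul_sub_le hpos hle
    (setIntegral_le_of_le_const_real₀ (nullMeasurableSet_le hf.aemeasurable aemeasurable_const)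
      hμs hf.integrableOn fun _ hx ↦ hx)
    (setIntegral_lowerTail_add_le hf ht hμs hμt)

end LowerTail

theorem condMean_lower_tail_le_general
    {Ω : Type*} [MeasureSpace Ω] [IsProbabilityMeasure (ℙ : Measure Ω)]
    (Z : Ω → ℝ) (hZ : Integrable Z)
    (τ : ℝ) (q : ℝ) (hq : q = (ℙ {ω | Z ω ≤ τ}).toReal) (hq0 : 0 < q)
    (B : Set ℝ) (hB : MeasurableSet B) (hBq : q ≤ (ℙ (Z ⁻¹' B)).toReal) :
    condMean Z {ω | Z ω ≤ τ} ≤ condMean Z (Z ⁻¹' B) := by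
  subst hq
  simpa only [condMean, setAverage_eq, smul_eq_mul, ← div_eq_inv_mul, measureReal_def] using
    setAverage_lowerTail_le hZ (hZ.aemeasurable.nullMeasurable hB) hq0 hBq

/-- **The lower tail minimizes the conditional expectation.**
Let `Z` be integrable and `τ ∈ ℝ` with `q = Pr[Z ≤ τ] > 0`.  Then for every measurable
`B ⊆ ℝ` with `Pr[Z ∈ B] ≥ q`, `E[Z | Z ≤ τ] ≤ E[Z | Z ∈ B]`. -/
theorem condMean_lower_tail_le
    {Ω : Type*} [MeasureSpace Ω] [IsProbabilityMeasure (ℙ : Measure Ω)]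
    (Z : Ω → ℝ) (hZ : Integrable Z) (hZm : Measurable Z)
    (τ : ℝ) (q : ℝ) (hq : q = (ℙ {ω | Z ω ≤ τ}).toReal) (hq0 : 0 < q)
    (B : Set ℝ) (hB : MeasurableSet B) (hBq : q ≤ (ℙ (Z ⁻¹' B)).toReal) :
    condMean Z {ω | Z ω ≤ τ} ≤ condMean Z (Z ⁻¹' B) :=
  condMean_lower_tail_le_general Z hZ τ q hq hq0 B hB hBq
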